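/- Any locally deterministic theory satisfies the coarse-grained version of Local Causality: conditioning on any further event beyond the thick-slice specification leaves the probability of any coarse-grained state of a shielded region unchanged. Precisely: suppose T is locally deterministic, sol ω ∈ T for every ω, R, R' ⊆ M are bounded, R' is shielded by R at time t, t' < t < R, g : M → S, C is the thick-slice specification event for (R, t', t, g), Q : (M → S) → Prop is a predicate depending only on values on R' (i.e., for all u, v : M → S, if u p = v p for all p ∈ R' then Q u ↔ Q v), A = {ω ∈ Ω : Q (sol ω)}, A and C are measurable, W is any measurable event, and μ(W ∩ C) > 0. Then μ[A | W ∩ C] = μ[A | C]. -/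

import Mathlib

open MeasureTheory ProbabilityTheory

noncomputable section

/-- Space: three-dimensional Euclidean space. -/
abbrev SpaceE : Type := EuclideanSpace ℝ (Fin 3)

/-- Spacetime: time × space. -/
abbrev SpacetimeM : Type := ℝ × SpaceE

/-- The cone slice Σ(R, t₀). -/
def coneSlice (R : Set SpacetimeM) (t₀ : ℝ) : Set SpaceE :=
  {x | ∃ p ∈ R, ‖x - p.2‖ ≤ |p.1 - t₀|}

/-- Local determinism of a theory `T`. -/
def LocallyDeterministic {S : Type*} (T : Set (SpacetimeM → S)) : Prop :=
  ∀ R : Set SpacetimeM, Bornology.IsBounded R →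
    ∀ t₀ : ℝ, ((∀ p ∈ R, t₀ < p.1) ∨ (∀ p ∈ R, p.1 < t₀)) →
      ∀ u ∈ T, ∀ v ∈ T,
        (∀ x ∈ coneSlice R t₀, u (t₀, x) = v (t₀, x)) →
        ∀ p ∈ R, u p = v p

/-- `R'` is shielded by `R` at time `t`: `t` lies below `R'`, and every point of
`R'` lies in the causal past of some point of `R`. -/
def ShieldedBy (R' R : Set SpacetimeM) (t : ℝ) : Prop :=
  (∀ p ∈ R', t < p.1) ∧ ∀ p ∈ R', ∃ q ∈ R, q.1 - p.1 ≥ ‖q.2 - p.2‖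

/-- The thick-slice specification event: the solution realised by `ω` agrees with
`g` on the thick slice C(Σ(R,t), Σ(R,t')) of the past light cone of `R`. -/
def thickSliceEvent {Ω : Type*} {S : Type*} (sol : Ω → SpacetimeM → S)
    (R : Set SpacetimeM) (t' t : ℝ) (g : SpacetimeM → S) : Set Ω :=
  {ω | ∀ s ∈ Set.Icc t' t, ∀ x ∈ coneSlice R s, sol ω (s, x) = g (s, x)}

/-! On the thick-slice event all solutions agree on the slice `Σ(R, t)`, which contains
`Σ(R', t)` because `R'` lies in the causal past of `R`; local determinism then makes them agree
on `R'`. So a coarse-grained state of `R'` is decided by the event `C`: it either holds on all of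
`C` or on none of it, and conditioning on any `W ∩ C` of positive measure gives `1` or `0`
exactly as conditioning on `C` does. -/

section CondOfDecided

variable {Ω : Type*} [MeasurableSpace Ω] {μ : Measure Ω} {s t : Set Ω}

lemma cond_eq_one_of_subset [IsFiniteMeasure μ] (hs : MeasurableSet s) (hμs : μ s ≠ 0)
    (hst : s ⊆ t) : μ[t | s] = 1 := by
  rw [cond_apply hs, Set.inter_eq_left.mpr hst, ENNReal.inv_mul_cancel hμs (measure_ne_top μ s)]

lemma cond_eq_zero_of_disjoint (hs : MeasurableSet s) (hst : Disjoint s t) : μ[t | s] = 0 := by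
  rw [cond_apply hs, hst.inter_eq, measure_empty, mul_zero]

/-- An event decided by `C` has the same probability under any further conditioning. -/
lemma cond_eq_cond_of_subset_of_decided [IsFiniteMeasure μ] {A B C : Set Ω}
    (hBm : MeasurableSet B) (hCm : MeasurableSet C) (hμB : μ B ≠ 0) (hBC : B ⊆ C)
    (hA : ∀ ω ∈ C, ∀ ω' ∈ C, (ω ∈ A ↔ ω' ∈ A)) : μ[A | B] = μ[A | C] := by
  have hμC : μ C ≠ 0 := fun h => hμB (measure_mono_null hBC h)
  obtain ⟨ω₀, hω₀⟩ := nonempty_of_measure_ne_zero hμC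
  by_cases hω₀A : ω₀ ∈ A
  · have hCA : C ⊆ A := fun ω hω => (hA ω hω ω₀ hω₀).mpr hω₀A
    rw [cond_eq_one_of_subset hBm hμB (hBC.trans hCA), cond_eq_one_of_subset hCm hμC hCA]
  · have hCA : Disjoint C A :=
      Set.disjoint_left.mpr fun ω hω hωA => hω₀A ((hA ω hω ω₀ hω₀).mp hωA)
    rw [cond_eq_zero_of_disjoint hBm (hCA.mono_left hBC), cond_eq_zero_of_disjoint hCm hCA]

end CondOfDecided

lemma coneSlice_subset_of_shieldedBy {R R' : Set SpacetimeM} {t : ℝ} (h : ShieldedBy R' R t) :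
    coneSlice R' t ⊆ coneSlice R t := by
  rintro x ⟨p, hp, hxp⟩
  obtain ⟨q, hq, hqp⟩ := h.2 p hp
  have htp := h.1 p hp
  refine ⟨q, hq, ?_⟩
  rw [abs_of_pos (by linarith : 0 < p.1 - t)] at hxp
  rw [abs_of_pos (by linarith [norm_nonneg (q.2 - p.2)] : 0 < q.1 - t)]
  calc ‖x - q.2‖ ≤ ‖x - p.2‖ + ‖p.2 - q.2‖ := norm_sub_le_norm_sub_add_norm_sub _ _ _
    _ = ‖x - p.2‖ + ‖q.2 - p.2‖ := by rw [norm_sub_rev p.2 q.2]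
    _ ≤ q.1 - t := by linarith

lemma LocallyDeterministic.eqOn_of_shieldedBy {S : Type*} {T : Set (SpacetimeM → S)}
    (hT : LocallyDeterministic T) {R R' : Set SpacetimeM} (hR' : Bornology.IsBounded R')
    {t : ℝ} (hshield : ShieldedBy R' R t) {u v : SpacetimeM → S} (hu : u ∈ T) (hv : v ∈ T)
    (huv : ∀ x ∈ coneSlice R t, u (t, x) = v (t, x)) : ∀ p ∈ R', u p = v p :=
  hT R' hR' t (Or.inl hshield.1) u hu v hv fun x hx =>
    huv x (coneSlice_subset_of_shieldedBy hshield hx)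

lemma LocallyDeterministic.eqOn_of_mem_thickSliceEvent {Ω S : Type*}
    {T : Set (SpacetimeM → S)} (hT : LocallyDeterministic T) {sol : Ω → SpacetimeM → S}
    (hsol : ∀ ω, sol ω ∈ T) {R R' : Set SpacetimeM} (hR' : Bornology.IsBounded R') {t t' : ℝ}
    (hshield : ShieldedBy R' R t) (ht't : t' ≤ t) {g : SpacetimeM → S} {ω ω' : Ω}
    (hω : ω ∈ thickSliceEvent sol R t' t g) (hω' : ω' ∈ thickSliceEvent sol R t' t g) :
    ∀ p ∈ R', sol ω p = sol ω' p :=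
  hT.eqOn_of_shieldedBy hR' hshield (hsol ω) (hsol ω') fun x hx => by
    rw [hω t ⟨ht't, le_rfl⟩ x hx, hω' t ⟨ht't, le_rfl⟩ x hx]

theorem locallyDeterministic_localCausality_coarseGrained_general
    {Ω : Type*} [MeasurableSpace Ω] (μ : Measure Ω) [IsProbabilityMeasure μ]
    {S : Type*} (T : Set (SpacetimeM → S)) (hT : LocallyDeterministic T)
    (sol : Ω → SpacetimeM → S) (hsol : ∀ ω, sol ω ∈ T)
    (R R' : Set SpacetimeM)
    (hR' : Bornology.IsBounded R')
    (t t' : ℝ) (hshield : ShieldedBy R' R t) (ht't : t' < t)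
    (g : SpacetimeM → S) (C : Set Ω) (hC : C = thickSliceEvent sol R t' t g)
    (Q : (SpacetimeM → S) → Prop)
    (hQ : ∀ u v : SpacetimeM → S, (∀ p ∈ R', u p = v p) → (Q u ↔ Q v))
    (A : Set Ω) (hA : A = {ω | Q (sol ω)})
    (hCm : MeasurableSet C)
    (W : Set Ω) (hWm : MeasurableSet W)
    (hWCpos : 0 < μ (W ∩ C)) :
    μ[A | W ∩ C] = μ[A | C] := by
  subst hC hA
  refine cond_eq_cond_of_subset_of_decided (hWm.inter hCm) hCm hWCpos.ne'
    Set.inter_subset_right fun ω hω ω' hω' => hQ _ _ ?_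
  exact hT.eqOn_of_mem_thickSliceEvent hsol hR' hshield ht't.le hω hω'

/-- Coarse-grained half of Theorem 2: any locally deterministic theory satisfies
the coarse-grained version of Local Causality: conditioning on any further event
beyond the thick-slice specification leaves the probability of any coarse-grained
state of a shielded region unchanged. -/
theorem locallyDeterministic_localCausality_coarseGrained
    {Ω : Type*} [MeasurableSpace Ω] (μ : Measure Ω) [IsProbabilityMeasure μ]
    {S : Type*} (T : Set (SpacetimeM → S)) (hT : LocallyDeterministic T)
    (sol : Ω → SpacetimeM → S) (hsol : ∀ ω, sol ω ∈ T)
    (R R' : Set SpacetimeM) (hR : Bornology.IsBounded R)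
    (hR' : Bornology.IsBounded R')
    (t t' : ℝ) (hshield : ShieldedBy R' R t) (ht't : t' < t)
    (htR : ∀ p ∈ R, t < p.1)
    (g : SpacetimeM → S) (C : Set Ω) (hC : C = thickSliceEvent sol R t' t g)
    (Q : (SpacetimeM → S) → Prop)
    (hQ : ∀ u v : SpacetimeM → S, (∀ p ∈ R', u p = v p) → (Q u ↔ Q v))
    (A : Set Ω) (hA : A = {ω | Q (sol ω)})
    (hAm : MeasurableSet A) (hCm : MeasurableSet C)
    (W : Set Ω) (hWm : MeasurableSet W)
    (hWCpos : 0 < μ (W ∩ C)) :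
    μ[A | W ∩ C] = μ[A | C] :=
  locallyDeterministic_localCausality_coarseGrained_general μ T hT sol hsol R R' hR' t t' hshield
    ht't g C hC Q hQ A hA hCm W hWm hWCpos
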